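/- Let A be a C*-algebra, G ⋊_α H a semidirect product of groups, and (A, G ⋊_α H, {I_{(g,h)}}, {θ_{(g,h)}}) a partial dynamical system satisfying I_{(g,h)} ⊆ I_{(g,e)} ∩ I_{(e,h)} for all g ∈ G, h ∈ H. Then in fact I_{(g,h)} = I_{(g,e)} ∩ I_{(e,h)} for all g, h. -/

import Mathlib

open scoped ComplexOrder

/-- A partial dynamical system: a partial action of a group `G` on a C*-algebra `A`
by *-isomorphisms `θ g : I g⁻¹ → I g` between closed two-sided ideals. -/
structure PartialDynSys (G : Type*) [Group G] (A : Type*)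
    [NonUnitalNormedRing A] [StarRing A] [CStarRing A]
    [NormedSpace ℂ A] [IsScalarTower ℂ A A] [SMulCommClass ℂ A A]
    [StarModule ℂ A] [CompleteSpace A] where
  I : G → Submodule ℂ A
  closed : ∀ g, IsClosed ((I g : Set A))
  ideal_left : ∀ g, ∀ a ∈ I g, ∀ b : A, b * a ∈ I g
  ideal_right : ∀ g, ∀ a ∈ I g, ∀ b : A, a * b ∈ I g
  θ : G → A → A
  bijOn : ∀ g, Set.BijOn (θ g) ((I g⁻¹ : Submodule ℂ A) : Set A) ((I g : Submodule ℂ A) : Set A)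
  map_add : ∀ g, ∀ a ∈ I g⁻¹, ∀ b ∈ I g⁻¹, θ g (a + b) = θ g a + θ g b
  map_smul : ∀ g, ∀ c : ℂ, ∀ a ∈ I g⁻¹, θ g (c • a) = c • θ g a
  map_mul : ∀ g, ∀ a ∈ I g⁻¹, ∀ b ∈ I g⁻¹, θ g (a * b) = θ g a * θ g b
  map_star : ∀ g, ∀ a ∈ I g⁻¹, θ g (star a) = star (θ g a)
  one : ∀ a : A, θ 1 a = a
  compat : ∀ g h : G, ∀ a ∈ I g⁻¹, θ g a ∈ I h⁻¹ →
    a ∈ I (h * g)⁻¹ ∧ θ (h * g) a = θ h (θ g a)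

/-- A covariant representation of a partial dynamical system in a C*-algebra `C`:
maps `γ g : I g → C` satisfying the algebraic relations of the partial crossed
product (`γ g a` corresponds to `a δ_g`). -/
def CovariantRep {G : Type*} [Group G] {A : Type*}
    [NonUnitalNormedRing A] [StarRing A] [CStarRing A]
    [NormedSpace ℂ A] [IsScalarTower ℂ A A] [SMulCommClass ℂ A A]
    [StarModule ℂ A] [CompleteSpace A]
    (P : PartialDynSys G A) (C : Type*)
    [NonUnitalNormedRing C] [StarRing C] [CStarRing C]
    [NormedSpace ℂ C] [IsScalarTower ℂ C C] [SMulCommClass ℂ C C]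
    [StarModule ℂ C] [CompleteSpace C]
    (γ : G → A → C) : Prop :=
  (∀ g, ∀ a ∈ P.I g, ∀ b ∈ P.I g, γ g (a + b) = γ g a + γ g b) ∧
  (∀ g, ∀ c : ℂ, ∀ a ∈ P.I g, γ g (c • a) = c • γ g a) ∧
  (∀ g h : G, ∀ a ∈ P.I g, ∀ b ∈ P.I h,
    γ g a * γ h b = γ (g * h) (P.θ g (P.θ g⁻¹ a * b))) ∧
  (∀ g, ∀ a ∈ P.I g, star (γ g a) = γ g⁻¹ (P.θ g⁻¹ (star a)))

/-- `B`, together with the maps `δ g : I g → B` (`δ g a` corresponding to `a δ_g`),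
is the (full) partial crossed product of the partial dynamical system `P`: it is a
covariant representation which is nondegenerate (dense span), faithful on `A`, and
universal among covariant representations. -/
structure IsPartialCrossedProduct {G : Type*} [Group G] {A : Type*}
    [NonUnitalNormedRing A] [StarRing A] [CStarRing A]
    [NormedSpace ℂ A] [IsScalarTower ℂ A A] [SMulCommClass ℂ A A]
    [StarModule ℂ A] [CompleteSpace A]
    (P : PartialDynSys G A) (B : Type*)
    [NonUnitalNormedRing B] [StarRing B] [CStarRing B]
    [NormedSpace ℂ B] [IsScalarTower ℂ B B] [SMulCommClass ℂ B B]
    [StarModule ℂ B] [CompleteSpace B]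
    (δ : G → A → B) : Prop where
  covariant : CovariantRep P B δ
  faithful : ∀ a : A, δ 1 a = 0 → a = 0
  dense_span : Dense ((Submodule.span ℂ {b : B | ∃ g, ∃ a ∈ P.I g, b = δ g a} : Submodule ℂ B) : Set B)
  universal : ∀ (C : Type) (_ : NonUnitalNormedRing C) (_ : StarRing C)
    (_ : CStarRing C) (_ : NormedSpace ℂ C) (_ : IsScalarTower ℂ C C)
    (_ : SMulCommClass ℂ C C) (_ : StarModule ℂ C) (_ : CompleteSpace C)
    (γ : G → A → C), CovariantRep P C γ →
    ∃ φ : B → C, Continuous φ ∧ (∀ x y : B, φ (x + y) = φ x + φ y) ∧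
      (∀ (c : ℂ) (x : B), φ (c • x) = c • φ x) ∧
      (∀ x y : B, φ (x * y) = φ x * φ y) ∧
      (∀ x : B, φ (star x) = star (φ x)) ∧
      ∀ g, ∀ a ∈ P.I g, φ (δ g a) = γ g a

/-! Pull `a ∈ I_{(g,e)} ∩ I_{(e,h)}` back along `θ_{(g,e)}`: its image lies in
`I_{(g,e)⁻¹(e,h)} = I_{(g⁻¹,h)} ⊆ I_{(e,h)}`, and pushing forward again lands it in
`I_{(g,e)(e,h)} = I_{(g,h)}`. -/

namespace PartialDynSys

variable {G : Type*} [Group G] {A : Type*}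
    [NonUnitalNormedRing A] [StarRing A] [CStarRing A]
    [NormedSpace ℂ A] [IsScalarTower ℂ A A] [SMulCommClass ℂ A A]
    [StarModule ℂ A] [CompleteSpace A] (P : PartialDynSys G A)

theorem θ_mem (x : G) {a : A} (ha : a ∈ P.I x⁻¹) : P.θ x a ∈ P.I x :=
  (P.bijOn x).mapsTo ha

theorem θ_inv_θ {x : G} {a : A} (ha : a ∈ P.I x⁻¹) : P.θ x⁻¹ (P.θ x a) = a := by
  obtain ⟨-, h⟩ := P.compat x x⁻¹ a ha (by simpa using P.θ_mem x ha)
  rw [← h, inv_mul_cancel, P.one]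

theorem θ_θ_inv {x : G} {a : A} (ha : a ∈ P.I x) : P.θ x (P.θ x⁻¹ a) = a := by
  simpa using P.θ_inv_θ (x := x⁻¹) (by simpa using ha)

theorem θ_mem_mul {x y : G} {a : A} (hx : a ∈ P.I x⁻¹) (hy : a ∈ P.I y) :
    P.θ x a ∈ P.I (x * y) := by
  have hb : P.θ y⁻¹ a ∈ P.I y⁻¹ := P.θ_mem y⁻¹ (by simpa using hy)
  obtain ⟨hmem, hθ⟩ := P.compat y x (P.θ y⁻¹ a) hb (by rwa [P.θ_θ_inv hy])
  simpa [hθ, P.θ_θ_inv hy] using P.θ_mem (x * y) hmem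

theorem mem_mul_of_θ_inv_mem {x y : G} {a : A} (hx : a ∈ P.I x)
    (hy : P.θ x⁻¹ a ∈ P.I y) : a ∈ P.I (x * y) := by
  simpa [P.θ_θ_inv hx] using P.θ_mem_mul (P.θ_mem x⁻¹ (by simpa using hx)) hy

end PartialDynSys

/-- For a partial dynamical system over a semidirect product `G ⋊[α] H` whose
domains satisfy `I_{(g,h)} ⊆ I_{(g,e)} ∩ I_{(e,h)}`, one in fact has
`I_{(g,h)} = I_{(g,e)} ∩ I_{(e,h)}`. -/
theorem semidirect_domains_eq
    {G H : Type*} [Group G] [Group H] (α : H →* MulAut G)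
    {A : Type*} [NonUnitalNormedRing A] [StarRing A] [CStarRing A]
    [NormedSpace ℂ A] [IsScalarTower ℂ A A] [SMulCommClass ℂ A A]
    [StarModule ℂ A] [CompleteSpace A]
    (P : PartialDynSys (G ⋊[α] H) A)
    (hsub : ∀ (g : G) (h : H),
      P.I ⟨g, h⟩ ≤ P.I ⟨g, 1⟩ ⊓ P.I ⟨1, h⟩) :
    ∀ (g : G) (h : H), P.I ⟨g, h⟩ = P.I ⟨g, 1⟩ ⊓ P.I ⟨1, h⟩ := by
  intro g h
  refine le_antisymm (hsub g h) fun a ⟨hg, hh⟩ => ?_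
  have hmul : (⟨g, 1⟩ : G ⋊[α] H) * ⟨1, h⟩ = ⟨g, h⟩ := by ext <;> simp
  have hinv_mul : (⟨g, 1⟩ : G ⋊[α] H)⁻¹ * ⟨1, h⟩ = ⟨g⁻¹, h⟩ := by ext <;> simp
  have hpull : P.θ (⟨g, 1⟩ : G ⋊[α] H)⁻¹ a ∈ P.I ⟨g⁻¹, h⟩ :=
    hinv_mul ▸ P.θ_mem_mul (by rwa [inv_inv]) hh
  exact hmul ▸ P.mem_mul_of_θ_inv_mem hg (hsub g⁻¹ h hpull).2
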